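/- Let X be a gamma(N,1) random variable with N a positive integer and I ≥ 0 an independent random variable. Then Pr(X ≥ c·I) ≤ Σ_{n=1}^{N} C(N,n) (-1)^{n+1} E[exp(-a·n·c·I)] for any c > 0, where a = (N!)^{-1/N}. -/

import Mathlib

/-!
Conditioning on `I`, it suffices to bound the tail `Pr(X ≥ y) = 1 - F(y)` of the gamma(N,1) law
by `1 - (1 - e^{-ay})^N`, whose binomial expansion is the sum in the statement. This is Alzer's
inequality `(1 - e^{-ay})^N ≤ F(y)`. The difference `D` of its two sides vanishes at `0` and at
`∞`, and the logarithm of the ratio of the two derivatives is concave on `(0, ∞)` with limit `0`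
at `0`, the limit being `0` because `a^N N! = 1`. Hence `D'` is first nonnegative and then
nonpositive, so `D ≥ 0`.
-/

open MeasureTheory ProbabilityTheory Real

open Set Filter Topology
open scoped Nat

theorem one_sub_one_sub_pow_eq_sum {R : Type*} [CommRing R] (t : R) (N : ℕ) :
    1 - (1 - t) ^ N = ∑ n ∈ Finset.Icc 1 N, (N.choose n : R) * (-1) ^ (n + 1) * t ^ n := by
  rw [sub_eq_neg_add 1 t, add_pow, Finset.sum_range_succ', ← Finset.Ico_add_one_right_eq_Icc,
    Finset.sum_Ico_eq_sum_range]
  simp only [add_tsub_cancel_right, one_pow, mul_one, pow_zero, Nat.choose_zero_right,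
    Nat.cast_one, sub_add_cancel_right, ← Finset.sum_neg_distrib]
  refine Finset.sum_congr rfl fun n _ => ?_
  rw [neg_pow, add_comm 1 n]
  ring

theorem nonneg_of_hasDerivAt_of_single_sign_change {D D' : ℝ → ℝ}
    (hD : ∀ y, HasDerivAt D (D' y) y) (hD0 : D 0 = 0) (hDtop : Tendsto D atTop (𝓝 0))
    (hD' : ∀ u z, 0 < u → u ≤ z → 0 < D' z → 0 ≤ D' u) {y : ℝ} (hy : 0 ≤ y) :
    0 ≤ D y := by
  have hcont : Continuous D := continuous_iff_continuousAt.2 fun x => (hD x).continuousAt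
  by_cases h : ∃ z, y ≤ z ∧ 0 < D' z
  · obtain ⟨z, hyz, hz⟩ := h
    have hmono : MonotoneOn D (Icc 0 z) :=
      monotoneOn_of_hasDerivWithinAt_nonneg (convex_Icc 0 z) hcont.continuousOn
        (fun x _ => (hD x).hasDerivWithinAt) fun x hx => by
          rw [interior_Icc] at hx
          exact hD' x z hx.1 hx.2.le hz
    simpa [hD0] using hmono ⟨le_rfl, hy.trans hyz⟩ ⟨hy, hyz⟩ hy
  · push Not at h
    have hanti : AntitoneOn D (Ici y) :=
      antitoneOn_of_hasDerivWithinAt_nonpos (convex_Ici y) hcont.continuousOn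
        (fun x _ => (hD x).hasDerivWithinAt) fun x hx => by
          rw [interior_Ici] at hx
          exact h x (le_of_lt hx)
    exact le_of_tendsto hDtop <| (eventually_ge_atTop y).mono fun z hz => hanti self_mem_Ici hz hz

theorem ConcaveOn.nonneg_of_le_of_pos {f : ℝ → ℝ} (hf : ConcaveOn ℝ (Ioi 0) f)
    (hlow : ∀ y, 0 < y → -y ≤ f y) {u z : ℝ} (hu : 0 < u) (huz : u ≤ z) (hz : 0 < f z) :
    0 ≤ f u := by
  by_contra! hneg
  set y := min (u / 2) (-f u / 2)
  have hy : 0 < y := lt_min (by linarith) (by linarith)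
  have hmin := hf.min_le_of_mem_Icc (x := y) hy (hu.trans_le huz)
    ⟨(min_le_left _ _).trans (by linarith), huz⟩
  have := hlow y hy
  have : y ≤ -f u / 2 := min_le_right _ _
  rcases min_le_iff.mp hmin with h | h <;> linarith

theorem sq_mul_exp_le_sq_exp_sub_one {u : ℝ} (hu : 0 ≤ u) :
    u ^ 2 * exp u ≤ (exp u - 1) ^ 2 := by
  set v := exp (u / 2)
  have hv : 0 < v := exp_pos _
  have hexp : exp u = v ^ 2 := by rw [← exp_nat_mul]; ring_nf
  have hsinh : u ≤ v - v⁻¹ := by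
    have := self_le_sinh_iff.mpr (by linarith : (0:ℝ) ≤ u / 2)
    rw [sinh_eq, exp_neg] at this
    linarith
  have h1 : u * v ≤ v ^ 2 - 1 := by
    have := mul_le_mul_of_nonneg_right hsinh hv.le
    rwa [sub_mul, inv_mul_cancel₀ hv.ne', ← sq] at this
  rw [hexp]
  nlinarith [mul_nonneg hu hv.le]

theorem concaveOn_log_sub_log_one_sub_exp_neg :
    ConcaveOn ℝ (Ioi 0) fun u => log u - log (1 - exp (-u)) := by
  have hexp : ∀ {u : ℝ}, 0 < u → 1 < exp u := one_lt_exp_iff.mpr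
  have hderiv : ∀ u ∈ Ioi (0 : ℝ), HasDerivAt (fun u => log u - log (1 - exp (-u)))
      (u⁻¹ - (exp u - 1)⁻¹) u := by
    intro u hu
    have h2 : exp (-u) < 1 := exp_lt_one_iff.mpr (neg_lt_zero.mpr hu)
    have hsub : HasDerivAt (fun u => 1 - exp (-u)) (exp (-u)) u := by
      simpa using ((hasDerivAt_neg u).exp).const_sub 1
    refine ((hasDerivAt_log hu.out.ne').sub (hsub.log (by linarith))).congr_deriv ?_
    rw [exp_neg]
    field_simp
  have hderiv2 : ∀ u ∈ Ioi (0 : ℝ), HasDerivAt (fun u => u⁻¹ - (exp u - 1)⁻¹)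
      (-(u ^ 2)⁻¹ + exp u / (exp u - 1) ^ 2) u := by
    intro u hu
    have hden : exp u - 1 ≠ 0 := by linarith [hexp hu]
    exact ((hasDerivAt_inv hu.out.ne').sub (((hasDerivAt_exp u).sub_const 1).inv hden)).congr_deriv
      (by ring)
  refine concaveOn_of_hasDerivWithinAt2_nonpos (convex_Ioi 0)
    (f' := fun u => u⁻¹ - (exp u - 1)⁻¹)
    (f'' := fun u => -(u ^ 2)⁻¹ + exp u / (exp u - 1) ^ 2)
    (fun u hu => (hderiv u hu).continuousAt.continuousWithinAt) ?_ ?_ ?_ <;> rw [interior_Ioi]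
  · exact fun u hu => (hderiv u hu).hasDerivWithinAt
  · exact fun u hu => (hderiv2 u hu).hasDerivWithinAt
  · intro u (hu : 0 < u)
    have h1 := hexp hu
    have := sq_mul_exp_le_sq_exp_sub_one hu.le
    have : exp u / (exp u - 1) ^ 2 ≤ (u ^ 2)⁻¹ := by
      rw [div_le_iff₀ (by nlinarith), inv_mul_eq_div, le_div_iff₀ (by positivity)]
      linarith
    linarith

theorem log_one_sub_exp_neg_le_log {u : ℝ} (hu : 0 < u) : log (1 - exp (-u)) ≤ log u :=
  log_le_log (by linarith [exp_lt_one_iff.mpr (neg_lt_zero.mpr hu)])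
    (by linarith [add_one_le_exp (-u)])

noncomputable def erlangCDF (N : ℕ) (y : ℝ) : ℝ :=
  1 - exp (-y) * ∑ k ∈ Finset.range N, y ^ k / k !

theorem erlangCDF_zero (M : ℕ) : erlangCDF (M + 1) 0 = 0 := by
  simp [erlangCDF, Finset.sum_range_succ']

theorem hasDerivAt_erlangCDF (M : ℕ) (y : ℝ) :
    HasDerivAt (erlangCDF (M + 1)) (y ^ M * exp (-y) / M !) y := by
  have hsum : HasDerivAt (fun y : ℝ => ∑ k ∈ Finset.range (M + 1), y ^ k / k !)
      (∑ k ∈ Finset.range M, y ^ k / k !) y := by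
    refine (HasDerivAt.fun_sum fun k _ => (hasDerivAt_pow k y).div_const _).congr_deriv ?_
    rw [Finset.sum_range_succ']
    simp only [CharP.cast_eq_zero, zero_mul, zero_div, add_zero, Nat.factorial_succ, Nat.cast_mul,
      add_tsub_cancel_right]
    refine Finset.sum_congr rfl fun k _ => ?_
    field_simp
  refine ((((hasDerivAt_neg y).exp).mul hsum).const_sub 1).congr_deriv ?_
  rw [Finset.sum_range_succ]
  field_simp
  ring

theorem tendsto_erlangCDF_atTop (N : ℕ) : Tendsto (erlangCDF N) atTop (𝓝 1) := by
  have : Tendsto (fun y : ℝ => ∑ k ∈ Finset.range N, y ^ k * exp (-y) / k !) atTop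
      (𝓝 0) := by
    simpa using tendsto_finsetSum _ fun k _ =>
      (tendsto_pow_mul_exp_neg_atTop_nhds_zero k).div_const (k ! : ℝ)
  refine (by simpa using this.const_sub 1 : Tendsto _ _ _).congr fun y => ?_
  rw [erlangCDF, Finset.mul_sum]
  congr 1
  exact Finset.sum_congr rfl fun k _ => by ring

theorem gammaPDFReal_natCast_succ (M : ℕ) {x : ℝ} (hx : 0 ≤ x) :
    gammaPDFReal (M + 1 : ℕ) 1 x = x ^ M * exp (-x) / M ! := by
  rw [gammaPDFReal, if_pos hx, Nat.cast_succ, Gamma_nat_eq_factorial, add_sub_cancel_right,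
    rpow_natCast, one_rpow, one_mul]
  ring

theorem gammaMeasure_real_Ici {N : ℕ} (hN : 0 < N) {y : ℝ} (hy : 0 ≤ y) :
    (gammaMeasure N 1).real (Ici y) = 1 - erlangCDF N y := by
  obtain ⟨M, rfl⟩ : ∃ M, N = M + 1 := ⟨N - 1, by omega⟩
  have hderiv : ∀ x ∈ Ici y, HasDerivAt (erlangCDF (M + 1)) (x ^ M * exp (-x) / M !) x :=
    fun x _ => hasDerivAt_erlangCDF M x
  calc (gammaMeasure (M + 1 : ℕ) 1).real (Ici y)
      = ∫ x in Ici y, gammaPDFReal (M + 1 : ℕ) 1 x := by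
        rw [measureReal_def, gammaMeasure, withDensity_apply _ measurableSet_Ici,
          integral_eq_lintegral_of_nonneg_ae
            (ae_of_all _ fun x => gammaPDFReal_nonneg (by positivity) one_pos x)
            (measurable_gammaPDFReal _ _).aestronglyMeasurable]
        rfl
    _ = ∫ x in Ioi y, x ^ M * exp (-x) / M ! := by
        rw [integral_Ici_eq_integral_Ioi]
        exact setIntegral_congr_fun measurableSet_Ioi fun x hx =>
          gammaPDFReal_natCast_succ M (hy.trans hx.out.le)
    _ = 1 - erlangCDF (M + 1) y :=
        integral_Ioi_of_hasDerivAt_of_tendsto' hderiv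
          (integrableOn_Ioi_deriv_of_nonneg' hderiv (fun x hx => by
            have : 0 ≤ x := hy.trans hx.out.le
            positivity) (tendsto_erlangCDF_atTop _))
          (tendsto_erlangCDF_atTop _)

noncomputable def alzerConst (N : ℕ) : ℝ := (N ! : ℝ) ^ (-(1 : ℝ) / N)

theorem alzerConst_pos (N : ℕ) : 0 < alzerConst N := rpow_pos_of_pos (by positivity) _

theorem alzerConst_le_one (N : ℕ) : alzerConst N ≤ 1 :=
  rpow_le_one_of_one_le_of_nonpos (Nat.one_le_cast.mpr N.factorial_pos)
    (by rw [neg_div]; exact neg_nonpos.mpr (by positivity))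

theorem natCast_mul_log_alzerConst {N : ℕ} (hN : N ≠ 0) :
    N * log (alzerConst N) = -log N ! := by
  rw [alzerConst, log_rpow (by positivity)]
  field_simp

/-- The logarithm of the ratio of the derivatives of the two sides of Alzer's inequality
for `N = M + 1`, simplified using `a ^ N * N! = 1`. -/
noncomputable def alzerLogRatio (M : ℕ) (y : ℝ) : ℝ :=
  M * (log (alzerConst (M + 1) * y) - log (1 - exp (-(alzerConst (M + 1) * y))))
    - (1 - alzerConst (M + 1)) * y

theorem concaveOn_alzerLogRatio (M : ℕ) : ConcaveOn ℝ (Ioi 0) (alzerLogRatio M) := by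
  set a := alzerConst (M + 1)
  have ha : 0 < a := alzerConst_pos (M + 1)
  have hpre : (a • LinearMap.id : ℝ →ₗ[ℝ] ℝ) ⁻¹' Ioi 0 = Ioi 0 := by
    ext y
    simp [mul_pos_iff_of_pos_left ha]
  have hscaled := concaveOn_log_sub_log_one_sub_exp_neg.comp_linearMap (a • LinearMap.id)
  rw [hpre] at hscaled
  refine ((hscaled.smul (Nat.cast_nonneg M)).sub
    ((convexOn_id (convex_Ioi 0)).smul (sub_nonneg.mpr (alzerConst_le_one (M + 1))))).congr
    fun y _ => ?_
  simp [alzerLogRatio, a]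

theorem neg_le_alzerLogRatio (M : ℕ) {y : ℝ} (hy : 0 < y) : -y ≤ alzerLogRatio M y := by
  have ha := alzerConst_pos (M + 1)
  have hlog := log_one_sub_exp_neg_le_log (mul_pos ha hy)
  have : 0 ≤ (M : ℝ) * (log (alzerConst (M + 1) * y)
      - log (1 - exp (-(alzerConst (M + 1) * y)))) := by
    apply mul_nonneg (Nat.cast_nonneg M)
    linarith
  rw [alzerLogRatio]
  nlinarith

theorem alzerLogRatio_eq_log_sub_log (M : ℕ) {y : ℝ} (hy : 0 < y) :
    alzerLogRatio M y = log (y ^ M * exp (-y) / M !)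
      - log ((M + 1) * (1 - exp (-(alzerConst (M + 1) * y))) ^ M
          * (alzerConst (M + 1) * exp (-(alzerConst (M + 1) * y)))) := by
  set a := alzerConst (M + 1)
  have ha : 0 < a := alzerConst_pos (M + 1)
  have he : 0 < 1 - exp (-(a * y)) := by
    linarith [exp_lt_one_iff.mpr (neg_lt_zero.mpr (mul_pos ha hy))]
  have hlogp : log (y ^ M * exp (-y) / M !) = M * log y - y - log M ! := by
    rw [log_div (by positivity) (by positivity), log_mul (by positivity) (exp_pos _).ne', log_pow,
      log_exp]
    ring
  have hlogq : log ((M + 1) * (1 - exp (-(a * y))) ^ M * (a * exp (-(a * y))))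
      = log (M + 1) + M * log (1 - exp (-(a * y))) + log a - a * y := by
    rw [log_mul (by positivity) (by positivity), log_mul (by positivity) (by positivity),
      log_mul ha.ne' (exp_pos _).ne', log_pow, log_exp]
    ring
  have hloga := natCast_mul_log_alzerConst (N := M + 1) (by omega)
  rw [Nat.factorial_succ, Nat.cast_mul, log_mul (by positivity) (by positivity)] at hloga
  push_cast at hloga
  rw [alzerLogRatio, log_mul ha.ne' hy.ne', hlogp, hlogq]
  linarith

theorem hasDerivAt_one_sub_exp_neg_mul_pow (a : ℝ) (M : ℕ) (y : ℝ) :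
    HasDerivAt (fun y => (1 - exp (-(a * y))) ^ (M + 1))
      ((M + 1) * (1 - exp (-(a * y))) ^ M * (a * exp (-(a * y)))) y := by
  have hinner : HasDerivAt (fun y => 1 - exp (-(a * y))) (a * exp (-(a * y))) y := by
    simpa [mul_comm] using (((hasDerivAt_id y).const_mul a).neg.exp).const_sub 1
  simpa using hinner.fun_pow (M + 1)

theorem tendsto_one_sub_exp_neg_mul_pow_atTop {a : ℝ} (ha : 0 < a) (N : ℕ) :
    Tendsto (fun y => (1 - exp (-(a * y))) ^ N) atTop (𝓝 1) := by
  have : Tendsto (fun y => exp (-(a * y))) atTop (𝓝 0) :=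
    tendsto_exp_neg_atTop_nhds_zero.comp (tendsto_id.const_mul_atTop ha)
  simpa using (this.const_sub 1).pow N

theorem alzer_inequality (N : ℕ) {y : ℝ} (hy : 0 ≤ y) :
    (1 - exp (-(alzerConst N * y))) ^ N ≤ erlangCDF N y := by
  rcases N with _ | M
  · simp [erlangCDF]
  set a := alzerConst (M + 1)
  have ha : 0 < a := alzerConst_pos (M + 1)
  set p : ℝ → ℝ := fun y => y ^ M * exp (-y) / (M ! : ℝ)
  set q : ℝ → ℝ := fun y => (M + 1) * (1 - exp (-(a * y))) ^ M * (a * exp (-(a * y)))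
  have hp : ∀ y, 0 < y → 0 < p y := fun y hy => by positivity
  have hq : ∀ y, 0 < y → 0 < q y := fun y hy => by
    have : 0 < 1 - exp (-(a * y)) := by
      linarith [exp_lt_one_iff.mpr (neg_lt_zero.mpr (mul_pos ha hy))]
    positivity
  refine sub_nonneg.mp (nonneg_of_hasDerivAt_of_single_sign_change
    (D := fun y => erlangCDF (M + 1) y - (1 - exp (-(a * y))) ^ (M + 1)) (D' := fun y => p y - q y)
    (fun y => (hasDerivAt_erlangCDF M y).sub (hasDerivAt_one_sub_exp_neg_mul_pow a M y))
    (by simp [erlangCDF_zero])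
    (by simpa using (tendsto_erlangCDF_atTop _).sub (tendsto_one_sub_exp_neg_mul_pow_atTop ha _))
    (fun u z hu huz hz => ?_) hy)
  have hlog_pos : 0 < alzerLogRatio M z := by
    have hz0 := hu.trans_le huz
    rw [alzerLogRatio_eq_log_sub_log M hz0, sub_pos]
    exact log_lt_log (hq z hz0) (sub_pos.mp hz)
  have := (concaveOn_alzerLogRatio M).nonneg_of_le_of_pos (fun y => neg_le_alzerLogRatio M) hu huz
    hlog_pos
  rw [alzerLogRatio_eq_log_sub_log M hu, sub_nonneg, log_le_log_iff (hq u hu) (hp u hu)] at this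
  exact sub_nonneg.mpr this

theorem measureReal_le_eq_integral_of_indepFun {Ω : Type*} [MeasurableSpace Ω] {P : Measure Ω}
    [IsFiniteMeasure P] {X Y : Ω → ℝ} (hX : Measurable X) (hY : Measurable Y)
    (hXY : IndepFun X Y P) :
    P.real {ω | Y ω ≤ X ω} = ∫ ω, (P.map X).real (Ici (Y ω)) ∂P := by
  have hS : MeasurableSet {p : ℝ × ℝ | p.1 ≤ p.2} :=
    measurableSet_le measurable_fst measurable_snd
  have hmap : P.map (fun ω => (Y ω, X ω)) = (P.map Y).prod (P.map X) :=
    (indepFun_iff_map_prod_eq_prod_map_map hY.aemeasurable hX.aemeasurable).mp hXY.symm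
  have htail : Measurable fun y => P.map X (Ici y) :=
    Antitone.measurable fun _ _ h => measure_mono (Ici_subset_Ici.mpr h)
  calc P.real {ω | Y ω ≤ X ω} = ((P.map Y).prod (P.map X) {p | p.1 ≤ p.2}).toReal := by
        rw [← hmap, Measure.map_apply (hY.prodMk hX) hS]
        rfl
    _ = (∫⁻ y, P.map X (Ici y) ∂(P.map Y)).toReal := by
        rw [Measure.prod_apply hS]
        rfl
    _ = (∫⁻ ω, P.map X (Ici (Y ω)) ∂P).toReal := by rw [lintegral_map htail hY]
    _ = ∫ ω, (P.map X).real (Ici (Y ω)) ∂P :=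
        (integral_toReal (htail.comp hY).aemeasurable
          (ae_of_all _ fun _ => measure_lt_top _ _)).symm

theorem gammaMeasure_real_Ici_le_sum {N : ℕ} (hN : 0 < N) {y : ℝ} (hy : 0 ≤ y) :
    (gammaMeasure N 1).real (Ici y)
      ≤ ∑ n ∈ Finset.Icc 1 N, (N.choose n : ℝ) * (-1) ^ (n + 1)
          * exp (-(alzerConst N * n * y)) := by
  have hpow (n : ℕ) : exp (-(alzerConst N * n * y)) = exp (-(alzerConst N * y)) ^ n := by
    rw [← exp_nat_mul]
    ring_nf
  simp only [hpow, ← one_sub_one_sub_pow_eq_sum, gammaMeasure_real_Ici hN hy]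
  linarith [alzer_inequality N hy]

/-- Let `X` be a gamma(N,1) random variable (`N` a positive integer) and `I ≥ 0` an
independent random variable. Then, with `a = (N!)^{-1/N}`, for any `c > 0`:
`Pr(X ≥ c·I) ≤ Σ_{n=1}^{N} C(N,n) (-1)^{n+1} E[exp(-a n c I)]`. -/
theorem prob_gamma_ge_le_binomial_bound {Ω : Type*} [MeasureSpace Ω]
    [IsProbabilityMeasure (ℙ : Measure Ω)]
    (N : ℕ) (hN : 0 < N) (X I : Ω → ℝ) (hX : Measurable X) (hI : Measurable I)
    (hXgamma : Measure.map X ℙ = gammaMeasure N 1)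
    (hInn : ∀ ω, 0 ≤ I ω) (hindep : IndepFun X I ℙ)
    (c : ℝ) (hc : 0 < c) :
    (ℙ {ω | c * I ω ≤ X ω}).toReal
      ≤ ∑ n ∈ Finset.Icc 1 N, (N.choose n : ℝ) * (-1 : ℝ) ^ (n + 1)
          * ∫ ω, Real.exp (-((N.factorial : ℝ) ^ (-(1 : ℝ) / N) * n * c * I ω)) ∂ℙ := by
  have hexp_int : ∀ n : ℕ, Integrable (fun ω => exp (-(alzerConst N * n * c * I ω))) ℙ :=
    fun n => Integrable.of_bound (by fun_prop) 1 (ae_of_all _ fun ω => by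
      rw [norm_of_nonneg (exp_pos _).le, exp_le_one_iff, neg_nonpos]
      have := alzerConst_pos N
      have := hInn ω
      positivity)
  calc (ℙ {ω | c * I ω ≤ X ω}).toReal
      = ∫ ω, (gammaMeasure N 1).real (Ici (c * I ω)) ∂ℙ := by
        rw [← hXgamma]
        exact measureReal_le_eq_integral_of_indepFun hX (hI.const_mul c)
          (hindep.comp measurable_id (measurable_const_mul c))
    _ ≤ ∫ ω, ∑ n ∈ Finset.Icc 1 N, (N.choose n : ℝ) * (-1) ^ (n + 1)
          * exp (-(alzerConst N * n * c * I ω)) ∂ℙ := by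
        refine integral_mono_of_nonneg (ae_of_all _ fun ω => measureReal_nonneg)
          (integrable_finsetSum _ fun n _ => (hexp_int n).const_mul _) (ae_of_all _ fun ω => ?_)
        simpa only [mul_assoc] using gammaMeasure_real_Ici_le_sum hN (mul_nonneg hc.le (hInn ω))
    _ = ∑ n ∈ Finset.Icc 1 N, (N.choose n : ℝ) * (-1) ^ (n + 1)
          * ∫ ω, exp (-(alzerConst N * n * c * I ω)) ∂ℙ := by
        rw [integral_finsetSum _ fun n _ => (hexp_int n).const_mul _]
        simp only [integral_const_mul]
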